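/- arXiv:2006.10870 — 8 statements merged into one kernel-verified Lean document; each statement's English description precedes it below -/
import Mathlib

section
/- Let n ≥ 2, k a field, and let \mathring{g} = exp(∑_{j=2}^{n} E_{1j})·w₁ ∈ GLₙ(k)/Q be the distinguished coset, where w₁ is the permutation matrix of the transposition (1 n) and Q is the mirabolic subgroup. Then the stabilizer of \mathring{g} in the diagonal torus T of GLₙ (acting by left multiplication on GLₙ/Q) is trivial. -/
open Matrix

/-!
Write `g̊ = U * w₁`, where `U` is the identity matrix with its first row replaced by ones; then
`g̊` is `U` with its columns permuted by `σ = (1 n)`. Every row `i ≠ 1` of `g̊` is a standard basis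
row, so row `i` of `t * g̊ = g̊ * q` says that row `σ i` of `q` is `t i` times the basis row
`σ i`. Together with the mirabolic last row, `q = diag(t ∘ σ)` with the last entry replaced
by `1`. Row `1` of `g̊` is all ones, so `t 1` equals every column sum of `q`, i.e. every
diagonal entry of `q`: the last one gives `t 1 = 1`, the others `t i = t 1`.
-/

section

variable {n R : Type*} [DecidableEq n]

theorem Matrix.one_add_sum_single_eq_updateRow [Fintype n] [NonAssocSemiring R] (a : n) :
    1 + ∑ j ∈ Finset.univ.filter (fun j => j ≠ a), single a j (1 : R) = updateRow 1 a 1 := by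
  ext i j
  rcases eq_or_ne i a with rfl | hi
  · rcases eq_or_ne j i with rfl | hj
    · simp [Matrix.sum_apply, single_apply]
    · simp [hj, Matrix.sum_apply, single_apply, Ne.symm hj]
  · simp [hi, Matrix.sum_apply, Ne.symm hi]

theorem Matrix.of_eq_toPEquiv_toMatrix [Zero R] [One R] {m : Type*} (σ : m ≃ n) :
    (of fun i j => if j = σ i then (1 : R) else 0) = σ.toPEquiv.toMatrix := by
  ext i j
  simp [eq_comm]

theorem Matrix.submatrix_id_updateRow_self [Zero R] [One R] {m : Type*} (M : Matrix n m R)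
    (a : n) (f : m → m) : (updateRow M a 1).submatrix id f a = 1 := by
  ext j
  simp

theorem Matrix.submatrix_id_updateRow_one_of_ne [Zero R] [One R] {a i : n}
    (τ : Equiv.Perm n) (hi : i ≠ a) :
    (updateRow (1 : Matrix n n R) a 1).submatrix id τ i = Pi.single (τ.symm i) 1 := by
  ext j
  simp [updateRow_apply, hi, one_apply, Pi.single_apply, Equiv.eq_symm_apply, eq_comm]

variable [Fintype n] [Semiring R] {a b : n} {τ : Equiv.Perm n} {d : n → R} {q : Matrix n n R}

theorem Matrix.eq_diagonal_of_diagonal_mul_submatrix_updateRow_one (hτ : τ b = a)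
    (hq : q b = Pi.single b 1)
    (h : diagonal d * (updateRow 1 a 1).submatrix id τ = (updateRow 1 a 1).submatrix id τ * q) :
    q = diagonal (Function.update (d ∘ τ) b 1) := by
  funext m
  change q m = (diagonal _).row m
  rw [row_diagonal]
  by_cases hm : m = b
  · rw [hm, hq, Function.update_self]
  · have hτm : τ m ≠ a := hτ ▸ τ.injective.ne hm
    have hrow := congrFun h (τ m)
    rw [mul_apply_eq_vecMul _ q, submatrix_id_updateRow_one_of_ne τ hτm, τ.symm_apply_apply,
      single_one_vecMul] at hrow
    rw [Function.update_of_ne hm, Function.comp_apply]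
    refine hrow.symm.trans (funext fun j => ?_)
    simp [diagonal_mul, updateRow_apply, hτm, one_apply, Pi.single_apply, eq_comm]

theorem Matrix.eq_one_of_diagonal_mul_submatrix_updateRow_one (hτ : τ b = a)
    (hq : q b = Pi.single b 1)
    (h : diagonal d * (updateRow 1 a 1).submatrix id τ = (updateRow 1 a 1).submatrix id τ * q) :
    d = 1 := by
  have hq_diag := eq_diagonal_of_diagonal_mul_submatrix_updateRow_one hτ hq h
  have hconst (j : n) : Function.update (d ∘ τ) b 1 j = d a := by
    have hentry := congrFun (congrFun h a) j
    rwa [hq_diag, diagonal_mul, mul_diagonal, submatrix_id_updateRow_self, Pi.one_apply,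
      mul_one, one_mul, eq_comm] at hentry
  have hda : d a = 1 := by simpa using (hconst b).symm
  funext i
  obtain ⟨j, rfl⟩ := τ.surjective i
  by_cases hj : j = b
  · rw [hj, hτ, hda, Pi.one_apply]
  · simpa [hj, hda] using hconst j

end

/-- Let `n = N+2 ≥ 2` and `\mathring{g} = (I + ∑_{j≠1} E_{1j})·w₁` where `w₁` is the
permutation matrix of the transposition `(1 n)`.  The stabilizer in the diagonal torus `T`
of the coset `\mathring{g}·Q` in `GLₙ/Q` (with `Q` the mirabolic subgroup) is trivial:
if `t·\mathring{g} = \mathring{g}·q` for some mirabolic `q`, then `t = 1`. -/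
theorem stab_T_of_generic_mirabolic_coset_trivial (k : Type*) [Field k] (N : ℕ)
    (w₁ : Matrix (Fin (N + 2)) (Fin (N + 2)) k)
    (hw₁ : w₁ = Matrix.of fun i j =>
      if j = Equiv.swap (0 : Fin (N + 2)) (Fin.last (N + 1)) i then 1 else 0)
    (mg : Matrix (Fin (N + 2)) (Fin (N + 2)) k)
    (hmg : mg = (1 + ∑ j ∈ Finset.univ.filter (fun j : Fin (N + 2) => j ≠ 0),
        Matrix.single 0 j (1 : k)) * w₁)
    (t : Fin (N + 2) → kˣ)
    (ht : ∃ q : Matrix (Fin (N + 2)) (Fin (N + 2)) k, IsUnit q ∧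
      (∀ j, q (Fin.last (N + 1)) j = if j = Fin.last (N + 1) then 1 else 0) ∧
      Matrix.diagonal (fun i => (t i : k)) * mg = mg * q) :
    ∀ i, t i = 1 := by
  obtain ⟨q, -, hq_last, heq⟩ := ht
  have hmg' : mg = (updateRow 1 0 1).submatrix id (Equiv.swap 0 (Fin.last (N + 1))) := by
    rw [hmg, hw₁, one_add_sum_single_eq_updateRow, of_eq_toPEquiv_toMatrix,
      PEquiv.mul_toMatrix_toPEquiv, Equiv.symm_swap]
  have hq : q (Fin.last (N + 1)) = Pi.single (Fin.last (N + 1)) 1 :=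
    funext fun j => (hq_last j).trans (Pi.single_apply _ _ _).symm
  rw [hmg'] at heq
  have ht_one := eq_one_of_diagonal_mul_submatrix_updateRow_one (Equiv.swap_apply_right _ _) hq heq
  exact fun i => Units.ext (congrFun ht_one i)
end

section
/- Let n ≥ 2, i ∈ {2,…,n}, and wᵢ the permutation matrix of the transposition (i n). For any g in the Bruhat cell B·wᵢ·Q/Q of GLₙ/Q (B upper triangular Borel, Q mirabolic), the one-parameter subgroup T₁ = {diag(t,1,…,1)} is contained in the stabilizer of g under the left multiplication action of T. -/
/-! Write `g = b wᵢ q₀` and `t₁ = diag(t,1,…,1)`. Since `b⁻¹` is upper triangular and `i` is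
not the first index, the `i`-th row of `b⁻¹` vanishes in the first column, so `b⁻¹ t₁ b` has
`i`-th row `eᵢ`. Conjugating by `wᵢ` moves this row to the last one, so
`q = q₀⁻¹ wᵢ (b⁻¹ t₁ b) wᵢ q₀` is mirabolic, and `t₁ g = g q`. -/

open Matrix

namespace Matrix

variable {m R : Type*} [DecidableEq m]

theorem one_row_eq_single [Zero R] [One R] (r : m) : (1 : Matrix m m R) r = Pi.single r 1 :=
  funext fun _ => one_eq_pi_single

theorem permMatrix_row_eq_single [Zero R] [One R] (σ : Equiv.Perm m) (r : m) :
    σ.permMatrix R r = Pi.single (σ r) 1 :=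
  PEquiv.toMatrix_toPEquiv_apply σ r

variable [Fintype m]

theorem mul_row_eq_of_row_eq_single [NonAssocSemiring R] {A B : Matrix m m R} {r s : m}
    (h : A r = Pi.single s 1) : (A * B) r = B s := by
  rw [mul_apply_eq_vecMul, h, single_one_vecMul]
  rfl

variable (R) in
/-- Matrices whose `r`-th row is `e_r`; its units form the mirabolic subgroup when `r` is the
last index. -/
def mirabolic [Semiring R] (r : m) : Submonoid (Matrix m m R) where
  carrier := {A | A r = Pi.single r 1}
  mul_mem' hA hB := (mul_row_eq_of_row_eq_single hA).trans hB
  one_mem' := one_row_eq_single r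

theorem mem_mirabolic_iff [Semiring R] {A : Matrix m m R} {r : m} :
    A ∈ mirabolic R r ↔ ∀ j, A r j = if j = r then 1 else 0 := by
  change A r = Pi.single r 1 ↔ _
  simp only [funext_iff, Pi.single_apply]

theorem nonsing_inv_mem_mirabolic [CommRing R] {A : Matrix m m R} {r : m}
    (hA : A ∈ mirabolic R r) (hdet : IsUnit A.det) : A⁻¹ ∈ mirabolic R r := by
  have h := mul_row_eq_of_row_eq_single (B := A⁻¹) hA
  rwa [mul_nonsing_inv A hdet, one_row_eq_single, eq_comm] at h

theorem permMatrix_mul_mul_permMatrix_inv_mem_mirabolic [Semiring R] (σ : Equiv.Perm m)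
    {M : Matrix m m R} {r : m} (hM : M ∈ mirabolic R (σ r)) :
    σ.permMatrix R * M * σ⁻¹.permMatrix R ∈ mirabolic R r := by
  change _ = _
  rw [mul_assoc, mul_row_eq_of_row_eq_single (permMatrix_row_eq_single σ r),
    mul_row_eq_of_row_eq_single hM, permMatrix_row_eq_single, Equiv.Perm.inv_def,
    Equiv.symm_apply_apply]

theorem nonsing_inv_mul_diagonal_mul_row_eq_single [CommRing R] {b : Matrix m m R}
    (hb : IsUnit b.det) {v : m → R} {r : m} (hv : ∀ j, b⁻¹ r j ≠ 0 → v j = 1) :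
    (b⁻¹ * diagonal v * b) r = Pi.single r 1 := by
  have hrow : (b⁻¹ * diagonal v) r = b⁻¹ r := by
    ext j
    rw [mul_diagonal]
    by_cases hj : b⁻¹ r j = 0
    · rw [hj, zero_mul]
    · rw [hv j hj, mul_one]
  rw [mul_apply_eq_vecMul, hrow, ← mul_apply_eq_vecMul, nonsing_inv_mul b hb, one_row_eq_single]

end Matrix

/-- Let `n = N+2 ≥ 2` and `i ≠ 1` (zero-indexed: `i ≠ 0`), and let `wᵢ` be the permutation
matrix of the transposition `(i n)`.  For any `g = b·wᵢ·q₀` in the Bruhat cell `B·wᵢ·Q`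
(`b` upper-triangular invertible, `q₀` mirabolic), the one-parameter subgroup
`T₁ = {diag(t,1,…,1)}` lies in the stabilizer of the coset `g·Q` under left
multiplication: `diag(t,1,…,1)·g = g·q` for some mirabolic `q`. -/
theorem T1_in_stabilizer_of_bruhat_cell (k : Type*) [Field k] (N : ℕ)
    (i : Fin (N + 2)) (hi : i ≠ 0)
    (wi : Matrix (Fin (N + 2)) (Fin (N + 2)) k)
    (hwi : wi = Matrix.of fun a b =>
      if b = Equiv.swap i (Fin.last (N + 1)) a then 1 else 0)
    (b : Matrix (Fin (N + 2)) (Fin (N + 2)) k)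
    (hb : IsUnit b) (hbu : ∀ p q : Fin (N + 2), q < p → b p q = 0)
    (q₀ : Matrix (Fin (N + 2)) (Fin (N + 2)) k)
    (hq₀unit : IsUnit q₀)
    (hq₀ : ∀ j, q₀ (Fin.last (N + 1)) j = if j = Fin.last (N + 1) then 1 else 0)
    (g : Matrix (Fin (N + 2)) (Fin (N + 2)) k)
    (hg : g = b * wi * q₀)
    (t : kˣ) :
    ∃ q : Matrix (Fin (N + 2)) (Fin (N + 2)) k, IsUnit q ∧
      (∀ j, q (Fin.last (N + 1)) j = if j = Fin.last (N + 1) then 1 else 0) ∧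
      Matrix.diagonal (fun a => if a = 0 then (t : k) else 1) * g = g * q := by
  set σ := Equiv.swap i (Fin.last (N + 1))
  set d := diagonal fun a : Fin (N + 2) => if a = 0 then (t : k) else 1
  have hw : wi = σ.permMatrix k := by
    subst hwi; ext; simp [eq_comm]
  have hww : wi * wi = 1 := by
    rw [hw, ← permMatrix_mul, Equiv.swap_mul_self, permMatrix_one]
  have hbdet := (isUnit_iff_isUnit_det b).mp hb
  have hq₀det := (isUnit_iff_isUnit_det q₀).mp hq₀unit
  have : Invertible b := b.invertibleOfIsUnitDet hbdet
  have hbinv : b⁻¹ i 0 = 0 :=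
    blockTriangular_inv_of_blockTriangular (b := id) hbu (Fin.pos_iff_ne_zero.mpr hi)
  have hM : b⁻¹ * d * b ∈ mirabolic k (σ (Fin.last (N + 1))) := by
    rw [Equiv.swap_apply_right]
    exact nonsing_inv_mul_diagonal_mul_row_eq_single hbdet fun j hj =>
      if_neg (by rintro rfl; exact hj hbinv)
  have hX : wi * (b⁻¹ * d * b) * wi ∈ mirabolic k (Fin.last (N + 1)) := by
    convert permMatrix_mul_mul_permMatrix_inv_mem_mirabolic σ hM using 2 <;>
      simp [hw, σ, Equiv.swap_inv]
  refine ⟨q₀⁻¹ * (wi * (b⁻¹ * d * b) * wi) * q₀, ?_, ?_, ?_⟩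
  · have hwunit : IsUnit wi := IsUnit.of_mul_eq_one _ hww
    have hdunit : IsUnit d := isUnit_diagonal.mpr <| Pi.isUnit_iff.mpr fun a => by
      split_ifs <;> simp
    have hMunit : IsUnit (b⁻¹ * d * b) := ((isUnit_nonsing_inv_iff.mpr hb).mul hdunit).mul hb
    exact ((isUnit_nonsing_inv_iff.mpr hq₀unit).mul ((hwunit.mul hMunit).mul hwunit)).mul hq₀unit
  · exact mem_mirabolic_iff.mp <| Submonoid.mul_mem _ (Submonoid.mul_mem _
      (nonsing_inv_mem_mirabolic (mem_mirabolic_iff.mpr hq₀) hq₀det) hX) (mem_mirabolic_iff.mpr hq₀)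
  · simp only [hg, mul_assoc]
    rw [mul_nonsing_inv_cancel_left _ _ hq₀det, ← mul_assoc wi wi, hww, one_mul,
      mul_nonsing_inv_cancel_left _ _ hbdet]
end

section
/- Let n ≥ 2 and β = α_{pq} a root of GLₙ with 2 ≤ p < q ≤ n. For t = diag(1,…,1,t_q,1,…,1) ∈ T_q set u(t) = exp((1−t_q)E_{pq}) = I + (1−t_q)E_{pq}. Then t·u(t) lies in the stabilizer of the coset \mathring{g}·Q in GLₙ/Q, where \mathring{g} = exp(∑_{j=2}^n E_{1j})·w₁, i.e., t·u(t)·\mathring{g}·Q = \mathring{g}·Q. -/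
open Matrix

/-- Let `n = N+2 ≥ 2` and `β = α_{pq}` a root of `GLₙ` with `2 ≤ p < q ≤ n`
(zero-indexed: `0 < p < q`).  For `t = diag(1,…,1,t_q,1,…,1)` and
`u(t) = I + (1−t_q)·E_{pq}`, the element `t·u(t)` stabilizes the coset
`\mathring{g}·Q = (I + ∑_{j≠1} E_{1j})·w₁·Q` in `GLₙ/Q`:
`t·u(t)·\mathring{g} = \mathring{g}·q'` for some mirabolic `q'`. -/
theorem tu_stabilizes_generic_mirabolic_coset (k : Type*) [Field k] (N : ℕ)
    (p q : Fin (N + 2)) (hp : p ≠ 0) (hpq : p < q)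
    (w₁ : Matrix (Fin (N + 2)) (Fin (N + 2)) k)
    (hw₁ : w₁ = Matrix.of fun i j =>
      if j = Equiv.swap (0 : Fin (N + 2)) (Fin.last (N + 1)) i then 1 else 0)
    (mg : Matrix (Fin (N + 2)) (Fin (N + 2)) k)
    (hmg : mg = (1 + ∑ j ∈ Finset.univ.filter (fun j : Fin (N + 2) => j ≠ 0),
        Matrix.single 0 j (1 : k)) * w₁)
    (c : kˣ)
    (t : Matrix (Fin (N + 2)) (Fin (N + 2)) k)
    (ht : t = Matrix.diagonal (fun a => if a = q then (c : k) else 1))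
    (u : Matrix (Fin (N + 2)) (Fin (N + 2)) k)
    (hu : u = 1 + (1 - (c : k)) • Matrix.single p q (1 : k)) :
    ∃ q' : Matrix (Fin (N + 2)) (Fin (N + 2)) k, IsUnit q' ∧
      (∀ j, q' (Fin.last (N + 1)) j = if j = Fin.last (N + 1) then 1 else 0) ∧
      t * u * mg = mg * q' := by
  set σ : Equiv.Perm (Fin (N + 2)) := Equiv.swap 0 (Fin.last (N + 1)) with hσ
  have hq0 : q ≠ 0 := by
    rintro rfl
    exact absurd (lt_of_le_of_lt (Fin.zero_le p) hpq) (lt_irrefl _)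
  have hqp : q ≠ p := (hpq.ne).symm
  -- t as 1 + scalar multiple of stdBasisMatrix
  have ht' : t = 1 + ((c : k) - 1) • Matrix.single q q (1 : k) := by
    subst ht
    ext i j
    simp only [Matrix.diagonal, Matrix.of_apply, Matrix.add_apply, Matrix.one_apply,
      Matrix.smul_apply, Matrix.single, smul_eq_mul]
    by_cases hij : i = j
    · subst hij
      by_cases hiq : i = q
      · subst hiq; simp
      · simp only [if_pos rfl, if_neg hiq,
          if_neg (show ¬(q = i ∧ q = i) from fun h => hiq h.1.symm)]
        ring
    · simp only [if_neg hij,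
        if_neg (show ¬(q = i ∧ q = j) from fun h => hij (h.1.symm.trans h.2))]
      ring
  -- product t*u
  have htu : t * u = 1 + ((c : k) - 1) • Matrix.single q q (1 : k)
      + (1 - (c : k)) • Matrix.single p q (1 : k) := by
    rw [ht', hu]
    have h0 : Matrix.single q q (1 : k) * Matrix.single p q (1 : k) = 0 :=
      Matrix.single_mul_single_of_ne (1 : k) q q p hqp 1
    simp only [add_mul, mul_add, mul_one, one_mul, Matrix.smul_mul, Matrix.mul_smul, h0,
      smul_zero, add_zero]
  set Nm : Matrix (Fin (N + 2)) (Fin (N + 2)) k :=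
    ∑ j ∈ Finset.univ.filter (fun j : Fin (N + 2) => j ≠ 0), Matrix.single 0 j (1 : k)
    with hNm
  -- tu commutes with 1 + Nm
  have hEqN : Matrix.single q q (1 : k) * Nm = 0 := by
    rw [hNm, Finset.mul_sum]
    refine Finset.sum_eq_zero fun j _ => Matrix.single_mul_single_of_ne (1 : k) q q 0 hq0 1
  have hEpN : Matrix.single p q (1 : k) * Nm = 0 := by
    rw [hNm, Finset.mul_sum]
    refine Finset.sum_eq_zero fun j _ => Matrix.single_mul_single_of_ne (1 : k) p q 0 hq0 1
  have hNEq : Nm * Matrix.single q q (1 : k) = Matrix.single 0 q (1 : k) := by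
    rw [hNm, Finset.sum_mul]
    rw [Finset.sum_eq_single q]
    · simpa using Matrix.single_mul_single_same (c := (1 : k)) 0 q q 1
    · intro b _ hb
      exact Matrix.single_mul_single_of_ne (1 : k) 0 b _ hb 1
    · intro h
      exact absurd (Finset.mem_filter.mpr ⟨Finset.mem_univ q, hq0⟩) h
  have hNEp : Nm * Matrix.single p q (1 : k) = Matrix.single 0 q (1 : k) := by
    rw [hNm, Finset.sum_mul]
    rw [Finset.sum_eq_single p]
    · simpa using Matrix.single_mul_single_same (c := (1 : k)) 0 p q 1
    · intro b _ hb
      exact Matrix.single_mul_single_of_ne (1 : k) 0 b _ hb 1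
    · intro h
      exact absurd (Finset.mem_filter.mpr ⟨Finset.mem_univ p, hp⟩) h
  have h1 : (t * u) * Nm = Nm := by
    rw [htu]
    simp only [add_mul, one_mul, Matrix.smul_mul, hEqN, hEpN, smul_zero, add_zero]
  have h2 : Nm * (t * u) = Nm := by
    rw [htu]
    simp only [mul_add, mul_one, Matrix.mul_smul, hNEq, hNEp]
    have hz : ((c : k) - 1) + (1 - (c : k)) = 0 := by ring
    rw [add_assoc, ← add_smul, hz, zero_smul, add_zero]
  have hcomm : (t * u) * (1 + Nm) = (1 + Nm) * (t * u) := by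
    rw [mul_add, add_mul, mul_one, one_mul, h1, h2]
  -- w₁ lemmas
  have hwl : ∀ (M : Matrix (Fin (N + 2)) (Fin (N + 2)) k) i j, (w₁ * M) i j = M (σ i) j := by
    intro M i j
    simp [hw₁, Matrix.mul_apply]
  have hwr : ∀ (M : Matrix (Fin (N + 2)) (Fin (N + 2)) k) i j, (M * w₁) i j = M i (σ j) := by
    intro M i j
    simp only [hw₁, Matrix.mul_apply, Matrix.of_apply, mul_ite, mul_one, mul_zero]
    rw [Finset.sum_eq_single (σ j)]
    · simp [hσ, Equiv.swap_apply_self]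
    · intro b _ hb
      rw [if_neg]
      intro hc
      apply hb
      rw [hc, hσ, Equiv.swap_apply_self]
    · simp
  have hw2 : w₁ * w₁ = 1 := by
    ext i j
    rw [hwl, hw₁]
    simp only [Matrix.of_apply, Matrix.one_apply, hσ, Equiv.swap_apply_self]
    exact if_congr eq_comm rfl rfl
  -- inverses
  have htinv : t * Matrix.diagonal (fun a => if a = q then ((c⁻¹ : kˣ) : k) else 1) = 1 := by
    rw [ht, Matrix.diagonal_mul_diagonal]
    have : (fun a : Fin (N + 2) => (if a = q then (c : k) else 1) *
        (if a = q then ((c⁻¹ : kˣ) : k) else 1)) = fun _ => 1 := by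
      funext a
      by_cases h : a = q <;> simp [h]
    rw [this, Matrix.diagonal_one]
  have hut : IsUnit t :=
    ⟨⟨t, _, htinv, mul_eq_one_comm.mp htinv⟩, rfl⟩
  have hEE : Matrix.single p q (1 : k) * Matrix.single p q (1 : k) = 0 :=
    Matrix.single_mul_single_of_ne (1 : k) p q p hqp 1
  have huinv : u * (1 + ((c : k) - 1) • Matrix.single p q (1 : k)) = 1 := by
    rw [hu]
    simp only [mul_add, add_mul, mul_one, one_mul, Matrix.smul_mul, Matrix.mul_smul, hEE,
      smul_zero, add_zero]
    rw [add_assoc, ← add_smul, show (1 - (c : k)) + ((c : k) - 1) = 0 from by ring,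
      zero_smul, add_zero]
  have huu : IsUnit u :=
    ⟨⟨u, _, huinv, mul_eq_one_comm.mp huinv⟩, rfl⟩
  have huw : IsUnit w₁ := ⟨⟨w₁, w₁, hw2, hw2⟩, rfl⟩
  refine ⟨w₁ * (t * u) * w₁, (huw.mul (hut.mul huu)).mul huw, ?_, ?_⟩
  · -- last row
    intro j
    rw [hwr, hwl, hσ, Equiv.swap_apply_right]
    simp only [htu, Matrix.add_apply, Matrix.smul_apply, Matrix.one_apply,
      Matrix.single, Matrix.of_apply, smul_eq_mul]
    rw [if_neg (show ¬(q = 0 ∧ q = σ j) from fun h => hq0 h.1),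
      if_neg (show ¬(p = 0 ∧ q = σ j) from fun h => hp h.1), mul_zero, mul_zero,
      add_zero, add_zero]
    have hiff : ((0 : Fin (N + 2)) = σ j) ↔ j = Fin.last (N + 1) := by
      rw [eq_comm, hσ, Equiv.swap_apply_eq_iff, Equiv.swap_apply_left]
    exact if_congr hiff rfl rfl
  · -- the coset equation
    rw [hmg]
    calc t * u * ((1 + Nm) * w₁) = (t * u) * (1 + Nm) * w₁ := (mul_assoc _ _ _).symm
      _ = (1 + Nm) * (t * u) * w₁ := by rw [hcomm]
      _ = (1 + Nm) * ((t * u) * w₁) := mul_assoc _ _ _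
      _ = (1 + Nm) * ((1 * (t * u)) * w₁) := by rw [one_mul]
      _ = (1 + Nm) * (((w₁ * w₁) * (t * u)) * w₁) := by rw [hw2]
      _ = (1 + Nm) * ((w₁ * (w₁ * (t * u))) * w₁) := by rw [mul_assoc w₁ w₁ (t * u)]
      _ = (1 + Nm) * (w₁ * ((w₁ * (t * u)) * w₁)) := by rw [mul_assoc w₁ _ w₁]
      _ = (1 + Nm) * w₁ * (w₁ * (t * u) * w₁) := by rw [← mul_assoc]
end

section
/- Let n ≥ 1, d ∈ {1,…,n}, 𝔤₁ = span{E_{pq} : q ≡ p+1 (mod d)}, and for 1 ≤ i ≤ d let Vᵢ = span{E_{pq} : p ≡ i, q ≡ i+1 (mod d)}. Then 𝔤₁ = ⊕_{i=1}^d Vᵢ as vector spaces, and each Vᵢ is invariant under conjugation by G₀ = {A ∈ GLₙ : A_{ij}=0 for i ≢ j (mod d)}. -/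
open Matrix

/-- `𝔤₁ = span{E_{pq} : q ≡ p+1 (mod d)}` as a subspace of `𝔤𝔩ₙ`. -/
def gOne (k : Type*) [Field k] (n d : ℕ) : Submodule k (Matrix (Fin n) (Fin n) k) where
  carrier := {X | ∀ p q : Fin n, (q : ℕ) % d ≠ ((p : ℕ) + 1) % d → X p q = 0}
  add_mem' := by
    intro a b ha hb p q h
    simp [Matrix.add_apply, ha p q h, hb p q h]
  zero_mem' := by intro p q h; simp
  smul_mem' := by
    intro c a ha p q h
    simp [Matrix.smul_apply, ha p q h]

/-- `Vᵢ = span{E_{pq} : p ≡ i, q ≡ i+1 (mod d)}` (here `i` is a residue mod `d`). -/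
def Vres (k : Type*) [Field k] (n d i : ℕ) : Submodule k (Matrix (Fin n) (Fin n) k) where
  carrier := {X | ∀ p q : Fin n,
    ¬((p : ℕ) % d = i % d ∧ (q : ℕ) % d = (i + 1) % d) → X p q = 0}
  add_mem' := by
    intro a b ha hb p q h
    simp [Matrix.add_apply, ha p q h, hb p q h]
  zero_mem' := by intro p q h; simp
  smul_mem' := by
    intro c a ha p q h
    simp [Matrix.smul_apply, ha p q h]

lemma mem_Vres_iff {k : Type*} [Field k] {n d i : ℕ} {X : Matrix (Fin n) (Fin n) k} :
    X ∈ Vres k n d i ↔ ∀ p q : Fin n,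
      ¬((p : ℕ) % d = i % d ∧ (q : ℕ) % d = (i + 1) % d) → X p q = 0 := Iff.rfl

lemma mem_gOne_iff {k : Type*} [Field k] {n d : ℕ} {X : Matrix (Fin n) (Fin n) k} :
    X ∈ gOne k n d ↔ ∀ p q : Fin n, (q : ℕ) % d ≠ ((p : ℕ) + 1) % d → X p q = 0 := Iff.rfl

/-- Matrices vanishing on the block `(i, i+1)`. -/
def Wres (k : Type*) [Field k] (n d i : ℕ) : Submodule k (Matrix (Fin n) (Fin n) k) where
  carrier := {X | ∀ p q : Fin n,
    ((p : ℕ) % d = i % d ∧ (q : ℕ) % d = (i + 1) % d) → X p q = 0}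
  add_mem' := by
    intro a b ha hb p q h
    simp [Matrix.add_apply, ha p q h, hb p q h]
  zero_mem' := by intro p q h; simp
  smul_mem' := by
    intro c a ha p q h
    simp [Matrix.smul_apply, ha p q h]

lemma inv_block_diag {k : Type*} [Field k] {n d : ℕ} (g : GL (Fin n) k)
    (hg : ∀ i j : Fin n, (i : ℕ) % d ≠ (j : ℕ) % d →
      (g : Matrix (Fin n) (Fin n) k) i j = 0) :
    ∀ i j : Fin n, (i : ℕ) % d ≠ (j : ℕ) % d →
      ((g⁻¹ : GL (Fin n) k) : Matrix (Fin n) (Fin n) k) i j = 0 := by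
  intro i j hij
  set P : Matrix (Fin n) (Fin n) k :=
    Matrix.diagonal (fun a : Fin n => if ((a : ℕ) % d = (i : ℕ) % d) then (1:k) else 0) with hP
  have hcomm : P * (g : Matrix (Fin n) (Fin n) k) = (g : Matrix (Fin n) (Fin n) k) * P := by
    ext a b
    rw [hP, Matrix.diagonal_mul, Matrix.mul_diagonal]
    by_cases ha : (a : ℕ) % d = (i : ℕ) % d <;> by_cases hb : (b : ℕ) % d = (i : ℕ) % d
    · simp [ha, hb]
    · simp [ha, hb, hg a b (by rw [ha]; exact fun h => hb h.symm)]
    · simp [ha, hb, hg a b (by rw [hb]; exact ha)]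
    · simp [ha, hb]
  have hmul : (g : Matrix (Fin n) (Fin n) k) *
      ((g⁻¹ : GL (Fin n) k) : Matrix (Fin n) (Fin n) k) = 1 := g.mul_inv
  have hmul' : ((g⁻¹ : GL (Fin n) k) : Matrix (Fin n) (Fin n) k) *
      (g : Matrix (Fin n) (Fin n) k) = 1 := g.inv_mul
  have h2 : (g : Matrix (Fin n) (Fin n) k) *
      (P * ((g⁻¹ : GL (Fin n) k) : Matrix (Fin n) (Fin n) k)) = P := by
    rw [← mul_assoc, ← hcomm, mul_assoc, hmul, mul_one]
  have h3 : (g : Matrix (Fin n) (Fin n) k) *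
      (((g⁻¹ : GL (Fin n) k) : Matrix (Fin n) (Fin n) k) * P) = P := by
    rw [← mul_assoc, hmul, one_mul]
  have hcomm' : P * ((g⁻¹ : GL (Fin n) k) : Matrix (Fin n) (Fin n) k)
      = ((g⁻¹ : GL (Fin n) k) : Matrix (Fin n) (Fin n) k) * P := by
    have h4 := congrArg
      (fun M => ((g⁻¹ : GL (Fin n) k) : Matrix (Fin n) (Fin n) k) * M) (h2.trans h3.symm)
    simpa only [← mul_assoc, hmul', one_mul] using h4
  have h1 : (P * ((g⁻¹ : GL (Fin n) k) : Matrix (Fin n) (Fin n) k)) i j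
      = ((g⁻¹ : GL (Fin n) k) : Matrix (Fin n) (Fin n) k) i j := by
    rw [hP, Matrix.diagonal_mul]; simp
  have h2 : (((g⁻¹ : GL (Fin n) k) : Matrix (Fin n) (Fin n) k) * P) i j = 0 := by
    rw [hP, Matrix.mul_diagonal, if_neg (fun h => hij h.symm), mul_zero]
  rw [← h1, hcomm', h2]

/-- `𝔤₁ = ⊕_{i=1}^d Vᵢ` as vector spaces (the `Vᵢ` span `𝔤₁` and are independent),
and each `Vᵢ` is invariant under conjugation by
`G₀ = {A ∈ GLₙ : A_{ij} = 0 for i ≢ j (mod d)}`. -/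
theorem g1_direct_sum_of_V_and_invariance (k : Type*) [Field k] (n d : ℕ)
    (hd : 1 ≤ d) (hdn : d ≤ n) :
    (⨆ r : Fin d, Vres k n d (r : ℕ)) = gOne k n d ∧
    iSupIndep (fun r : Fin d => Vres k n d (r : ℕ)) ∧
    (∀ r : Fin d, ∀ g : GL (Fin n) k,
      (∀ i j : Fin n, (i : ℕ) % d ≠ (j : ℕ) % d →
        (g : Matrix (Fin n) (Fin n) k) i j = 0) →
      ∀ X ∈ Vres k n d (r : ℕ),
        (g : Matrix (Fin n) (Fin n) k) * X *
          ((g⁻¹ : GL (Fin n) k) : Matrix (Fin n) (Fin n) k) ∈ Vres k n d (r : ℕ)) := by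
  refine ⟨le_antisymm ?_ ?_, ?_, ?_⟩
  · -- ⨆ ≤ gOne
    refine iSup_le fun r => ?_
    intro X hX
    rw [mem_gOne_iff]
    intro p q h
    refine hX p q ?_
    rintro ⟨h1, h2⟩
    apply h
    rw [h2, Nat.add_mod ((r : ℕ)) 1, ← h1, ← Nat.add_mod]
  · -- gOne ≤ ⨆
    intro X hX
    have hsum : X = ∑ r : Fin d,
        Matrix.of (fun p q : Fin n => if (p : ℕ) % d = (r : ℕ) then X p q else 0) := by
      ext p q
      rw [Matrix.sum_apply]
      have key : ∀ r : Fin d,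
          (Matrix.of (fun p q : Fin n =>
            if (p : ℕ) % d = (r : ℕ) then X p q else 0)) p q
          = if (⟨(p : ℕ) % d, Nat.mod_lt _ hd⟩ : Fin d) = r then X p q else 0 := by
        intro r
        simp only [Matrix.of_apply, Fin.ext_iff]
      simp only [key]
      rw [Finset.sum_ite_eq]
      simp
    rw [hsum]
    refine Submodule.sum_mem _ fun r _ => ?_
    refine Submodule.mem_iSup_of_mem r ?_
    rw [mem_Vres_iff]
    intro p q h
    simp only [Matrix.of_apply]
    by_cases hp : (p : ℕ) % d = (r : ℕ)
    · rw [if_pos hp]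
      refine hX p q ?_
      intro hq
      apply h
      have hr : (r : ℕ) % d = (r : ℕ) := Nat.mod_eq_of_lt r.isLt
      refine ⟨by rw [hp, hr], ?_⟩
      rw [hq, Nat.add_mod ((p : ℕ)) 1, Nat.add_mod ((r : ℕ)) 1, hp, Nat.mod_eq_of_lt r.isLt]
    · rw [if_neg hp]
  · -- independence
    intro r
    rw [Submodule.disjoint_def]
    intro X hXr hXs
    have hW : X ∈ Wres k n d (r : ℕ) := by
      have hle : (⨆ j, ⨆ _ : j ≠ r, Vres k n d (j : ℕ)) ≤ Wres k n d (r : ℕ) := by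
        refine iSup_le fun j => iSup_le fun hjr => ?_
        intro Y hY p q hpq
        refine hY p q ?_
        rintro ⟨h1, h2⟩
        apply hjr
        have hj : (j : ℕ) % d = (j : ℕ) := Nat.mod_eq_of_lt j.isLt
        have hr : (r : ℕ) % d = (r : ℕ) := Nat.mod_eq_of_lt r.isLt
        have : (j : ℕ) = (r : ℕ) := by rw [← hj, ← hr, ← h1, hpq.1]
        exact Fin.ext this
      exact hle hXs
    ext p q
    by_cases hpq : (p : ℕ) % d = (r : ℕ) % d ∧ (q : ℕ) % d = ((r : ℕ) + 1) % d
    · exact hW p q hpq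
    · exact hXr p q hpq
  · -- invariance
    intro r g hg X hX
    have hginv := inv_block_diag g hg
    rw [mem_Vres_iff]
    intro p q hpq
    rw [Matrix.mul_apply]
    refine Finset.sum_eq_zero fun b _ => ?_
    by_cases hb : (b : ℕ) % d = (q : ℕ) % d
    · have hgx : ((g : Matrix (Fin n) (Fin n) k) * X) p b = 0 := by
        rw [Matrix.mul_apply]
        refine Finset.sum_eq_zero fun a _ => ?_
        by_cases ha : (a : ℕ) % d = (p : ℕ) % d
        · have hXab : X a b = 0 := by
            refine hX a b ?_
            rintro ⟨h1, h2⟩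
            exact hpq ⟨by rw [← ha, h1], by rw [← hb, h2]⟩
          rw [hXab, mul_zero]
        · rw [hg p a (fun h => ha h.symm), zero_mul]
      rw [hgx, zero_mul]
    · rw [hginv b q hb, mul_zero]
end

section
/- Let n ≥ 1, d ∈ {1,…,n}, and consider the set of roots Φ(Υ) = { α_{ij} : 1 ≤ i ≤ d, i+d ≤ j ≤ n, j ≡ i (mod d) } and Φ(U_φ) = { α_{ij} : d+1 ≤ i ≤ n, i+d ≤ j ≤ n, j ≡ i (mod d) }. Then for each β = α_{ij} ∈ Φ(U_φ) there exists a unique α ∈ Φ(Υ) with α + β a root of GLₙ; explicitly α = α_{pi} where p ∈ {1,…,d} satisfies p ≡ i (mod d), and then α + β = α_{pj}. -/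
/-- Roots of `GLₙ` encoded as ordered pairs `(i,j)` of distinct indices in `{1,…,n}`. -/
def IsGLRoot (n : ℕ) (a : ℕ × ℕ) : Prop :=
  1 ≤ a.1 ∧ a.1 ≤ n ∧ 1 ≤ a.2 ∧ a.2 ≤ n ∧ a.1 ≠ a.2

/-- `Φ(Υ) = { α_{ij} : 1 ≤ i ≤ d, i+d ≤ j ≤ n, j ≡ i (mod d) }`. -/
def PhiUpsilon (n d : ℕ) : Set (ℕ × ℕ) :=
  {a | 1 ≤ a.1 ∧ a.1 ≤ d ∧ a.1 + d ≤ a.2 ∧ a.2 ≤ n ∧ a.2 % d = a.1 % d}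

/-- The sum of the `GLₙ`-roots `α = α_{pq}` and `β = α_{ij}` is again a root iff
`q = i` (giving `α_{pj}`) or `j = p` (giving `α_{iq}`). -/
def SumIsRoot (α β : ℕ × ℕ) : Prop :=
  (α.2 = β.1 ∧ α.1 ≠ β.2) ∨ (β.2 = α.1 ∧ β.1 ≠ α.2)

lemma aux_mod (a b : ℕ) (ha : 1 ≤ a) : ((a - 1) % b + 1) % b = a % b := by
  conv_rhs => rw [← Nat.sub_add_cancel ha]
  rw [Nat.add_mod, Nat.mod_mod_of_dvd _ dvd_rfl, ← Nat.add_mod]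

lemma aux_eq (d a c : ℕ) (ha1 : 1 ≤ a) (had : a ≤ d) (hc1 : 1 ≤ c) (hcd : c ≤ d)
    (h : a % d = c % d) : a = c := by
  rcases eq_or_lt_of_le had with rfl | hlt
  · rcases eq_or_lt_of_le hcd with rfl | hlt'
    · rfl
    · rw [Nat.mod_self, Nat.mod_eq_of_lt hlt'] at h; omega
  · rw [Nat.mod_eq_of_lt hlt] at h
    rcases eq_or_lt_of_le hcd with rfl | hlt'
    · rw [Nat.mod_self] at h; omega
    · rw [Nat.mod_eq_of_lt hlt'] at h; omega

/-- For each `β = α_{ij} ∈ Φ(U_φ)` (i.e. `d+1 ≤ i`, `i+d ≤ j ≤ n`, `j ≡ i (mod d)`)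
there is a unique `α ∈ Φ(Υ)` with `α + β` a root of `GLₙ`; explicitly `α = α_{pi}`
where `p ∈ {1,…,d}`, `p ≡ i (mod d)`, and then `α + β = α_{pj}` is a root. -/
theorem unique_alpha_in_PhiUpsilon (n d i j : ℕ) (hd : 1 ≤ d) (hdn : d ≤ n)
    (hi : d + 1 ≤ i) (hij : i + d ≤ j) (hj : j ≤ n) (hcong : j % d = i % d) :
    ∃ p : ℕ, 1 ≤ p ∧ p ≤ d ∧ p % d = i % d ∧ IsGLRoot n (p, j) ∧
      ∀ α : ℕ × ℕ, (α ∈ PhiUpsilon n d ∧ SumIsRoot α (i, j)) ↔ α = (p, i) := by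
  set p := (i - 1) % d + 1 with hp
  have hmod : (i - 1) % d < d := Nat.mod_lt _ hd
  have hpd : p ≤ d := by omega
  have hpm : p % d = i % d := aux_mod i d (by omega)
  have hdm : d * ((i - 1) / d) + (i - 1) % d = i - 1 := Nat.div_add_mod _ _
  have hq : 1 ≤ (i - 1) / d := (Nat.one_le_div_iff hd).mpr (by omega)
  have hdq : d ≤ d * ((i - 1) / d) := Nat.le_mul_of_pos_right d (by omega)
  have hpi : p + d ≤ i := by omega
  refine ⟨p, by omega, hpd, hpm, ⟨by omega, by omega, by omega, hj, by omega⟩, ?_⟩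
  rintro ⟨a, b⟩
  constructor
  · rintro ⟨hmem, hs⟩
    simp only [PhiUpsilon, Set.mem_setOf_eq] at hmem
    obtain ⟨h1, h2, h3, h4, h5⟩ := hmem
    rcases hs with ⟨hb, _⟩ | ⟨hb, _⟩
    · have hb' : b = i := hb
      subst hb'
      have : a = p := aux_eq d a p h1 h2 (by omega) hpd (by rw [hpm]; exact h5.symm)
      simp [this]
    · have hb' : j = a := hb
      omega
  · intro h
    simp only [Prod.mk.injEq] at h
    obtain ⟨rfl, rfl⟩ := h
    exact ⟨⟨by omega, hpd, hpi, by omega, hpm.symm⟩, Or.inl ⟨rfl, show p ≠ j by omega⟩⟩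
end

section
/- Let n ≥ 1, d ∈ {1,…,n}, and let U_L be the group of unipotent upper-triangular matrices u ∈ GLₙ with u_{ij} = 0 for i < j unless j ≡ i (mod d). Let Υ = { u ∈ U_L : u_{ij} = 0 for all i < j with i > d }, i.e., only rows 1,…,d may have nonzero off-diagonal entries, and U_φ = { u ∈ U_L : u_{ij} = 0 for all i < j with i ≤ d }. Then Υ is a commutative normal subgroup of U_L, U_φ is a subgroup, and U_L = U_φ ⋉ Υ (every element of U_L factors uniquely as an element of U_φ times an element of Υ). -/
open Matrix

variable (k : Type*) [Field k]

/-- `U_L`: unipotent upper-triangular matrices with `u_{ij} = 0` for `i < j`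
unless `j ≡ i (mod d)` (zero-indexed entries). -/
def memUL (n d : ℕ) (u : Matrix (Fin n) (Fin n) k) : Prop :=
  (∀ i, u i i = 1) ∧ (∀ i j : Fin n, j < i → u i j = 0) ∧
  (∀ i j : Fin n, i < j → (j : ℕ) % d ≠ (i : ℕ) % d → u i j = 0)

/-- `Υ ⊆ U_L`: only the first `d` rows (1-indexed rows `1,…,d`) may carry nonzero
off-diagonal entries. -/
def memUps (n d : ℕ) (u : Matrix (Fin n) (Fin n) k) : Prop :=
  memUL k n d u ∧ ∀ i j : Fin n, i < j → d ≤ (i : ℕ) → u i j = 0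

/-- `U_φ ⊆ U_L`: the first `d` rows have no nonzero off-diagonal entries. -/
def memUphi (n d : ℕ) (u : Matrix (Fin n) (Fin n) k) : Prop :=
  memUL k n d u ∧ ∀ i j : Fin n, i < j → (i : ℕ) < d → u i j = 0


namespace UPf

variable {k : Type*} [Field k] {n : ℕ}

/-- entries vanish outside the allowed set `q` (including the diagonal). -/
def Supp (q : Fin n → Fin n → Prop) (N : Matrix (Fin n) (Fin n) k) : Prop :=
  ∀ i j, ¬ q i j → N i j = 0

/-- unitriangular with off-diagonal support in `q`. -/
def Mem (q : Fin n → Fin n → Prop) (u : Matrix (Fin n) (Fin n) k) : Prop :=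
  (∀ i, u i i = 1) ∧ ∀ i j : Fin n, i ≠ j → ¬ q i j → u i j = 0

variable {q : Fin n → Fin n → Prop}

lemma mem_iff (hq1 : ∀ i j, q i j → i < j) (u : Matrix (Fin n) (Fin n) k) :
    Mem q u ↔ Supp q (u - 1) := by
  constructor
  · rintro ⟨h1, h2⟩ i j hq
    by_cases hij : i = j
    · subst hij; simp [Matrix.sub_apply, h1 i]
    · simp [Matrix.sub_apply, Matrix.one_apply_ne hij, h2 i j hij hq]
  · intro h
    constructor
    · intro i
      have := h i i (fun hqq => lt_irrefl i (hq1 _ _ hqq))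
      simpa [Matrix.sub_apply, sub_eq_zero] using this
    · intro i j hij hq
      have := h i j hq
      simpa [Matrix.sub_apply, Matrix.one_apply_ne hij, sub_eq_zero] using this

lemma Supp.add {A B : Matrix (Fin n) (Fin n) k} (hA : Supp q A) (hB : Supp q B) :
    Supp q (A + B) := fun i j h => by
  simp [Matrix.add_apply, hA i j h, hB i j h]

lemma Supp.mul (hq2 : ∀ i j l : Fin n, q i j → q j l → q i l)
    {A B : Matrix (Fin n) (Fin n) k} (hA : Supp q A) (hB : Supp q B) :
    Supp q (A * B) := by
  intro i j hq
  rw [Matrix.mul_apply]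
  refine Finset.sum_eq_zero fun l _ => ?_
  by_cases h1 : q i l
  · by_cases h2 : q l j
    · exact absurd (hq2 _ _ _ h1 h2) hq
    · rw [hB _ _ h2, mul_zero]
  · rw [hA _ _ h1, zero_mul]

lemma Mem.mul (hq1 : ∀ i j, q i j → i < j) (hq2 : ∀ i j l : Fin n, q i j → q j l → q i l)
    {u v : Matrix (Fin n) (Fin n) k} (hu : Mem q u) (hv : Mem q v) : Mem q (u * v) := by
  rw [mem_iff hq1] at *
  have h : u * v - 1 = (u - 1) * (v - 1) + (u - 1) + (v - 1) := by noncomm_ring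
  rw [h]
  exact ((hu.mul hq2 hv).add hu).add hv

lemma mem_one : Mem q (1 : Matrix (Fin n) (Fin n) k) :=
  ⟨fun i => Matrix.one_apply_eq i, fun _i _j hij _ => Matrix.one_apply_ne hij⟩

/-- products of `Mem` and `Supp` matrices stay supported -/
lemma Mem.mul_supp (hq1 : ∀ i j, q i j → i < j) (hq2 : ∀ i j l : Fin n, q i j → q j l → q i l)
    {u N : Matrix (Fin n) (Fin n) k} (hu : Mem q u) (hN : Supp q N) : Supp q (u * N) := by
  rw [mem_iff hq1] at hu
  have h : u * N = (u - 1) * N + N := by noncomm_ring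
  rw [h]
  exact (hu.mul hq2 hN).add hN

lemma Supp.mul_mem (hq1 : ∀ i j, q i j → i < j) (hq2 : ∀ i j l : Fin n, q i j → q j l → q i l)
    {u N : Matrix (Fin n) (Fin n) k} (hu : Mem q u) (hN : Supp q N) : Supp q (N * u) := by
  rw [mem_iff hq1] at hu
  have h : N * u = N * (u - 1) + N := by noncomm_ring
  rw [h]
  exact (hN.mul hq2 hu).add hN

lemma supp_pow_entry (hq1 : ∀ i j, q i j → i < j) {N : Matrix (Fin n) (Fin n) k}
    (hN : Supp q N) : ∀ (m : ℕ) (i j : Fin n), (j : ℕ) < (i : ℕ) + m → (N ^ m) i j = 0 := by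
  intro m
  induction m with
  | zero =>
    intro i j h
    rw [pow_zero]
    exact Matrix.one_apply_ne (Fin.ne_of_val_ne (by omega))
  | succ m ih =>
    intro i j h
    rw [pow_succ, Matrix.mul_apply]
    refine Finset.sum_eq_zero fun l _ => ?_
    by_cases h2 : q l j
    · have hlj : (l : ℕ) < (j : ℕ) := hq1 _ _ h2
      rw [ih i l (by omega), zero_mul]
    · rw [hN _ _ h2, mul_zero]

lemma supp_pow (hq2 : ∀ i j l : Fin n, q i j → q j l → q i l)
    {N : Matrix (Fin n) (Fin n) k} (hN : Supp q N) :
    ∀ m : ℕ, 0 < m → Supp q (N ^ m) := by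
  intro m
  induction m with
  | zero => intro h; omega
  | succ m ih =>
    intro _
    rcases Nat.eq_zero_or_pos m with hm | hm
    · subst hm; simpa using hN
    · rw [pow_succ]
      exact (ih hm).mul hq2 hN

/-- every `Mem q` matrix has a two-sided inverse in `Mem q`. -/
lemma mem_inv (hq1 : ∀ i j, q i j → i < j) (hq2 : ∀ i j l : Fin n, q i j → q j l → q i l)
    (hn : 0 < n) {u : Matrix (Fin n) (Fin n) k} (hu : Mem q u) :
    ∃ b, Mem q b ∧ u * b = 1 ∧ b * u = 1 := by
  set x : Matrix (Fin n) (Fin n) k := 1 - u with hxdef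
  have hx : Supp q x := by
    intro i j h
    by_cases hij : i = j
    · subst hij; simp [hxdef, Matrix.sub_apply, hu.1 i]
    · simp [hxdef, Matrix.sub_apply, Matrix.one_apply_ne hij, hu.2 i j hij h]
  have hxn : x ^ n = 0 := by
    ext i j
    simpa using supp_pow_entry hq1 hx n i j (by omega)
  refine ⟨∑ m ∈ Finset.range n, x ^ m, ?_, ?_, ?_⟩
  · constructor
    · intro i
      rw [Matrix.sum_apply]
      rw [Finset.sum_eq_single 0]
      · simp
      · intro m _ hm
        exact supp_pow hq2 hx m (Nat.pos_of_ne_zero hm) i i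
          (fun hqq => lt_irrefl i (hq1 _ _ hqq))
      · intro h0; exact absurd (Finset.mem_range.mpr hn) h0
    · intro i j hij h
      rw [Matrix.sum_apply]
      refine Finset.sum_eq_zero fun m _ => ?_
      rcases Nat.eq_zero_or_pos m with hm | hm
      · subst hm; simpa using Matrix.one_apply_ne hij
      · exact supp_pow hq2 hx m hm i j h
  · rw [mul_eq_one_comm]
    have h1 : (∑ m ∈ Finset.range n, x ^ m) * (x - 1) = x ^ n - 1 := geom_sum_mul x n
    have h2 : x - 1 = -u := by rw [hxdef]; abel
    rw [h2, hxn, Matrix.mul_neg, zero_sub] at h1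
    have := congrArg Neg.neg h1
    simpa using this
  · have h1 : (∑ m ∈ Finset.range n, x ^ m) * (x - 1) = x ^ n - 1 := geom_sum_mul x n
    have h2 : x - 1 = -u := by rw [hxdef]; abel
    rw [h2, hxn, Matrix.mul_neg, zero_sub] at h1
    have := congrArg Neg.neg h1
    simpa using this

lemma inv_unique {u b c : Matrix (Fin n) (Fin n) k} (hb : b * u = 1) (hc : u * c = 1) :
    c = b := by
  calc c = 1 * c := (one_mul c).symm
  _ = b * u * c := by rw [hb]
  _ = b * (u * c) := Matrix.mul_assoc ..
  _ = b := by rw [hc, Matrix.mul_one]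



/-- allowed positions for `U_L`. -/
def qL (n d : ℕ) : Fin n → Fin n → Prop :=
  fun i j => i < j ∧ (j : ℕ) % d = (i : ℕ) % d

/-- allowed positions for `Υ`. -/
def qY (n d : ℕ) : Fin n → Fin n → Prop :=
  fun i j => qL n d i j ∧ (i : ℕ) < d

/-- allowed positions for `U_φ`. -/
def qP (n d : ℕ) : Fin n → Fin n → Prop :=
  fun i j => qL n d i j ∧ d ≤ (i : ℕ)

variable {n d : ℕ}

lemma qL_lt : ∀ i j : Fin n, qL n d i j → i < j := fun _ _ h => h.1
lemma qY_lt : ∀ i j : Fin n, qY n d i j → i < j := fun _ _ h => h.1.1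
lemma qP_lt : ∀ i j : Fin n, qP n d i j → i < j := fun _ _ h => h.1.1

lemma qL_trans : ∀ i j l : Fin n, qL n d i j → qL n d j l → qL n d i l :=
  fun _ _ _ h1 h2 => ⟨h1.1.trans h2.1, h2.2.trans h1.2⟩
lemma qY_trans : ∀ i j l : Fin n, qY n d i j → qY n d j l → qY n d i l :=
  fun _ _ _ h1 h2 => ⟨qL_trans _ _ _ h1.1 h2.1, h1.2⟩
lemma qP_trans : ∀ i j l : Fin n, qP n d i j → qP n d j l → qP n d i l :=
  fun _ _ _ h1 h2 => ⟨qL_trans _ _ _ h1.1 h2.1, h1.2⟩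

variable {k : Type*} [Field k]

lemma memUL_iff (u : Matrix (Fin n) (Fin n) k) : memUL k n d u ↔ Mem (qL n d) u := by
  constructor
  · rintro ⟨h1, h2, h3⟩
    refine ⟨h1, fun i j hij hq => ?_⟩
    rcases lt_or_gt_of_ne hij with h | h
    · by_cases hm : (j : ℕ) % d = (i : ℕ) % d
      · exact absurd ⟨h, hm⟩ hq
      · exact h3 i j h hm
    · exact h2 i j h
  · rintro ⟨h1, h2⟩
    refine ⟨h1, fun i j hij => h2 i j (ne_of_gt hij) (fun hq => absurd hq.1 (asymm hij)),
      fun i j hij hm => h2 i j (ne_of_lt hij) (fun hq => hm hq.2)⟩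

lemma memUps_iff (u : Matrix (Fin n) (Fin n) k) : memUps k n d u ↔ Mem (qY n d) u := by
  constructor
  · rintro ⟨hUL, hextra⟩
    have h := (memUL_iff u).mp hUL
    refine ⟨h.1, fun i j hij hq => ?_⟩
    rcases lt_or_gt_of_ne hij with hlt | hgt
    · by_cases hid : (i : ℕ) < d
      · refine h.2 i j hij (fun hL => hq ⟨hL, hid⟩)
      · exact hextra i j hlt (le_of_not_gt hid)
    · exact hUL.2.1 i j hgt
  · rintro ⟨h1, h2⟩
    refine ⟨(memUL_iff u).mpr ⟨h1, fun i j hij hq => h2 i j hij (fun hY => hq hY.1)⟩,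
      fun i j hij hid => h2 i j (ne_of_lt hij) (fun hY => absurd hY.2 (not_lt.mpr hid))⟩

lemma memUphi_iff (u : Matrix (Fin n) (Fin n) k) : memUphi k n d u ↔ Mem (qP n d) u := by
  constructor
  · rintro ⟨hUL, hextra⟩
    have h := (memUL_iff u).mp hUL
    refine ⟨h.1, fun i j hij hq => ?_⟩
    rcases lt_or_gt_of_ne hij with hlt | hgt
    · by_cases hid : (i : ℕ) < d
      · exact hextra i j hlt hid
      · refine h.2 i j hij (fun hL => hq ⟨hL, le_of_not_gt hid⟩)
    · exact hUL.2.1 i j hgt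
  · rintro ⟨h1, h2⟩
    refine ⟨(memUL_iff u).mpr ⟨h1, fun i j hij hq => h2 i j hij (fun hP => hq hP.1)⟩,
      fun i j hij hid => h2 i j (ne_of_lt hij) (fun hP => absurd hP.2 (not_le.mpr hid))⟩

/-- products of two strictly-upper matrices supported in the `Υ` pattern vanish. -/
lemma suppY_mul_zero {N M : Matrix (Fin n) (Fin n) k}
    (hN : Supp (qY n d) N) (hM : Supp (qY n d) M) : N * M = 0 := by
  ext i j
  rw [Matrix.mul_apply, Matrix.zero_apply]
  refine Finset.sum_eq_zero fun l _ => ?_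
  by_cases h1 : qY n d i l
  · obtain ⟨⟨hil, hmod⟩, hid⟩ := h1
    have hil' : (i : ℕ) < (l : ℕ) := hil
    have hi : (i : ℕ) % d = (i : ℕ) := Nat.mod_eq_of_lt hid
    have h2 : ¬ qY n d l j := by
      rintro ⟨-, hld⟩
      have hl : (l : ℕ) % d = (l : ℕ) := Nat.mod_eq_of_lt hld
      omega
    rw [hM _ _ h2, mul_zero]
  · rw [hN _ _ h1, zero_mul]

lemma suppY_suppL {N : Matrix (Fin n) (Fin n) k} (hN : Supp (qY n d) N) :
    Supp (qL n d) N := fun i j h => hN i j (fun hY => h hY.1)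

end UPf

/-- `Υ` is a commutative normal subgroup of `U_L`, `U_φ` is a subgroup, and
`U_L = U_φ ⋉ Υ`: every element of `U_L` factors uniquely as an element of `U_φ`
times an element of `Υ`. -/
theorem Upsilon_commutative_normal_and_semidirect (n d : ℕ) (hd : 1 ≤ d) (hdn : d ≤ n) :
    -- `Υ` is a commutative subgroup
    (memUps k n d (1 : Matrix (Fin n) (Fin n) k)) ∧
    (∀ a b, memUps k n d a → memUps k n d b → memUps k n d (a * b) ∧ a * b = b * a) ∧
    (∀ a, memUps k n d a → ∃ b, memUps k n d b ∧ a * b = 1 ∧ b * a = 1) ∧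
    -- `Υ` is normal in `U_L`
    (∀ u a uinv, memUL k n d u → memUps k n d a → u * uinv = 1 → uinv * u = 1 →
      memUps k n d (u * a * uinv)) ∧
    -- `U_φ` is a subgroup
    (memUphi k n d (1 : Matrix (Fin n) (Fin n) k)) ∧
    (∀ a b, memUphi k n d a → memUphi k n d b → memUphi k n d (a * b)) ∧
    (∀ a, memUphi k n d a → ∃ b, memUphi k n d b ∧ a * b = 1 ∧ b * a = 1) ∧
    -- unique factorization `U_L = U_φ ⋉ Υ`
    (∀ u, memUL k n d u →
      ∃! vw : Matrix (Fin n) (Fin n) k × Matrix (Fin n) (Fin n) k,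
        memUphi k n d vw.1 ∧ memUps k n d vw.2 ∧ u = vw.1 * vw.2) := by
  have hn : 0 < n := lt_of_lt_of_le hd hdn
  refine ⟨?_, ?_, ?_, ?_, ?_, ?_, ?_, ?_⟩
  · exact (UPf.memUps_iff _).mpr UPf.mem_one
  · -- Υ closed under multiplication and commutative
    intro a b ha hb
    rw [UPf.memUps_iff] at ha hb
    refine ⟨(UPf.memUps_iff _).mpr (ha.mul UPf.qY_lt UPf.qY_trans hb), ?_⟩
    have hNa := (UPf.mem_iff UPf.qY_lt a).mp ha
    have hNb := (UPf.mem_iff UPf.qY_lt b).mp hb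
    have h1 : (a - 1) * (b - 1) = 0 := UPf.suppY_mul_zero hNa hNb
    have h2 : (b - 1) * (a - 1) = 0 := UPf.suppY_mul_zero hNb hNa
    have h3 : a * b - b * a = (a - 1) * (b - 1) - (b - 1) * (a - 1) := by noncomm_ring
    rw [h1, h2, sub_zero] at h3
    exact sub_eq_zero.mp h3
  · -- Υ closed under inverses
    intro a ha
    rw [UPf.memUps_iff] at ha
    have hN := (UPf.mem_iff UPf.qY_lt a).mp ha
    have hNN : (a - 1) * (a - 1) = 0 := UPf.suppY_mul_zero hN hN
    have key1 : a * (1 - (a - 1)) = 1 - (a - 1) * (a - 1) := by noncomm_ring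
    have key2 : (1 - (a - 1)) * a = 1 - (a - 1) * (a - 1) := by noncomm_ring
    refine ⟨1 - (a - 1), ?_, ?_, ?_⟩
    · rw [UPf.memUps_iff, UPf.mem_iff UPf.qY_lt]
      have heq : (1 - (a - 1) : Matrix (Fin n) (Fin n) k) - 1 = -(a - 1) := by abel
      rw [heq]
      intro i j h
      simp [Matrix.neg_apply, hN i j h]
    · rw [key1, hNN, sub_zero]
    · rw [key2, hNN, sub_zero]
  · -- Υ is normal in U_L
    intro u a uinv hu ha huv hvu
    rw [UPf.memUL_iff] at hu
    rw [UPf.memUps_iff] at ha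
    obtain ⟨bb, hbb, hub, hbu⟩ := UPf.mem_inv UPf.qL_lt UPf.qL_trans hn hu
    have huinv : uinv = bb := UPf.inv_unique hbu huv
    have hbmem : UPf.Mem (UPf.qL n d) uinv := huinv ▸ hbb
    have hNY : UPf.Supp (UPf.qY n d) (a - 1) := (UPf.mem_iff UPf.qY_lt a).mp ha
    have hNL : UPf.Supp (UPf.qL n d) (a - 1) := UPf.suppY_suppL hNY
    have hrow : ∀ i : Fin n, d ≤ (i : ℕ) → ∀ l, (u * (a - 1)) i l = 0 := by
      intro i hdi l
      rw [Matrix.mul_apply]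
      refine Finset.sum_eq_zero fun m _ => ?_
      by_cases hm : UPf.qY n d m l
      · have hmd : (m : ℕ) < d := hm.2
        have hzero : u i m = 0 := by
          refine hu.2 i m (Fin.ne_of_val_ne (by omega)) ?_
          rintro ⟨him, -⟩
          have : (i : ℕ) < (m : ℕ) := him
          omega
        rw [hzero, zero_mul]
      · rw [hNY _ _ hm, mul_zero]
    have hX : UPf.Supp (UPf.qL n d) (u * (a - 1) * uinv) :=
      (hu.mul_supp UPf.qL_lt UPf.qL_trans hNL).mul_mem UPf.qL_lt UPf.qL_trans hbmem
    have hXrow : ∀ i : Fin n, d ≤ (i : ℕ) → ∀ j, (u * (a - 1) * uinv) i j = 0 := by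
      intro i hdi j
      rw [Matrix.mul_apply]
      exact Finset.sum_eq_zero fun l _ => by rw [hrow i hdi l, zero_mul]
    have hXY : UPf.Supp (UPf.qY n d) (u * (a - 1) * uinv) := by
      intro i j h
      by_cases hL : UPf.qL n d i j
      · exact hXrow i (le_of_not_gt fun hid => h ⟨hL, hid⟩) j
      · exact hX i j hL
    rw [UPf.memUps_iff, UPf.mem_iff UPf.qY_lt]
    have heq : u * a * uinv - 1 = u * (a - 1) * uinv := by
      have h5 : u * a * uinv - 1 = u * (a - 1) * uinv + (u * uinv - 1) := by noncomm_ring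
      rw [h5, huv, sub_self, add_zero]
    rw [heq]
    exact hXY
  · exact (UPf.memUphi_iff _).mpr UPf.mem_one
  · -- U_φ closed under multiplication
    intro a b ha hb
    rw [UPf.memUphi_iff] at ha hb ⊢
    exact ha.mul UPf.qP_lt UPf.qP_trans hb
  · -- U_φ closed under inverses
    intro a ha
    rw [UPf.memUphi_iff] at ha
    obtain ⟨b, hb, h1, h2⟩ := UPf.mem_inv UPf.qP_lt UPf.qP_trans hn ha
    exact ⟨b, (UPf.memUphi_iff _).mpr hb, h1, h2⟩
  · -- unique factorization
    intro u hu
    rw [UPf.memUL_iff] at hu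
    set w : Matrix (Fin n) (Fin n) k :=
      Matrix.of (fun i j => if i = j then 1 else if (i : ℕ) < d then u i j else 0) with hw
    have hwY : UPf.Mem (UPf.qY n d) w := by
      constructor
      · intro i; simp [hw]
      · intro i j hij h
        simp only [hw, Matrix.of_apply, if_neg hij]
        by_cases hid : (i : ℕ) < d
        · rw [if_pos hid]
          exact hu.2 i j hij (fun hL => h ⟨hL, hid⟩)
        · rw [if_neg hid]
    have hMY : UPf.Supp (UPf.qY n d) (w - 1) := (UPf.mem_iff UPf.qY_lt w).mp hwY
    have hML : UPf.Supp (UPf.qL n d) (w - 1) := UPf.suppY_suppL hMY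
    have huM : u * (w - 1) = w - 1 := by
      ext i j
      rw [Matrix.mul_apply]
      refine (Finset.sum_eq_single i ?_ ?_).trans ?_
      · intro m _ hmi
        by_cases hq : UPf.qL n d i m
        · by_cases hY : UPf.qY n d m j
          · exfalso
            have h1 : (i : ℕ) < (m : ℕ) := hq.1
            have h2 : (m : ℕ) % d = (i : ℕ) % d := hq.2
            have h3 : (m : ℕ) < d := hY.2
            have h4 : (m : ℕ) % d = (m : ℕ) := Nat.mod_eq_of_lt h3
            have h5 : (i : ℕ) % d ≤ (i : ℕ) := Nat.mod_le _ _
            omega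
          · rw [hMY _ _ hY, mul_zero]
        · rw [hu.2 i m (Ne.symm hmi) hq, zero_mul]
      · intro h; exact absurd (Finset.mem_univ i) h
      · rw [hu.1 i, one_mul]
    have hMM : (w - 1) * (w - 1) = 0 := UPf.suppY_mul_zero hMY hMY
    have hvP : UPf.Mem (UPf.qP n d) (u - (w - 1)) := by
      constructor
      · intro i
        have h0 : (w - 1) i i = 0 := hMY i i (fun hq => lt_irrefl i (UPf.qY_lt _ _ hq))
        simp [Matrix.sub_apply, h0, hu.1 i]
      · intro i j hij h
        have hw1 : (w - 1) i j = w i j := by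
          simp [Matrix.sub_apply, Matrix.one_apply_ne hij]
        rw [Matrix.sub_apply, hw1]
        by_cases hL : UPf.qL n d i j
        · have hid : (i : ℕ) < d := by
            by_contra hnd
            exact h ⟨hL, le_of_not_gt hnd⟩
          simp [hw, if_neg hij, if_pos hid]
        · rw [hu.2 i j hij hL]
          simp only [hw, Matrix.of_apply, if_neg hij]
          rw [hu.2 i j hij hL]
          split <;> simp
    have hfact : u = (u - (w - 1)) * w := by
      have h6 : (u - (w - 1)) * w
          = u + u * (w - 1) - (w - 1) - (w - 1) * (w - 1) := by noncomm_ring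
      rw [h6, huM, hMM]
      abel
    refine ⟨(u - (w - 1), w), ⟨(UPf.memUphi_iff _).mpr hvP, (UPf.memUps_iff _).mpr hwY,
      hfact⟩, ?_⟩
    rintro ⟨v', w'⟩ ⟨hv', hw', hfac'⟩
    rw [UPf.memUphi_iff] at hv'
    rw [UPf.memUps_iff] at hw'
    obtain ⟨vi, hvi, hvvi, hviv⟩ := UPf.mem_inv UPf.qP_lt UPf.qP_trans hn hvP
    obtain ⟨wi', hwi', hwwi', hwiw'⟩ := UPf.mem_inv UPf.qY_lt UPf.qY_trans hn hw'
    have hvw : v' * w' = (u - (w - 1)) * w := by rw [← hfact, ← hfac']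
    have hx : vi * v' = w * wi' := by
      calc vi * v' = vi * v' * (w' * wi') := by rw [hwwi', Matrix.mul_one]
      _ = vi * (v' * w') * wi' := by simp only [Matrix.mul_assoc]
      _ = vi * ((u - (w - 1)) * w) * wi' := by rw [hvw]
      _ = vi * (u - (w - 1)) * (w * wi') := by simp only [Matrix.mul_assoc]
      _ = w * wi' := by rw [hviv, Matrix.one_mul]
    have hxP : UPf.Mem (UPf.qP n d) (vi * v') := hvi.mul UPf.qP_lt UPf.qP_trans hv'
    have hxY : UPf.Mem (UPf.qY n d) (w * wi') := hwY.mul UPf.qY_lt UPf.qY_trans hwi'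
    have hx1 : vi * v' = 1 := by
      ext i j
      by_cases hij : i = j
      · subst hij; rw [hxP.1 i, Matrix.one_apply_eq]
      · rw [Matrix.one_apply_ne hij]
        by_cases hid : (i : ℕ) < d
        · exact hxP.2 i j hij (fun hq => absurd hq.2 (not_le.mpr hid))
        · rw [hx]; exact hxY.2 i j hij (fun hq => absurd hq.2 hid)
    have hv'eq : v' = u - (w - 1) := by
      calc v' = (u - (w - 1)) * vi * v' := by rw [hvvi, Matrix.one_mul]
      _ = (u - (w - 1)) * (vi * v') := Matrix.mul_assoc ..
      _ = u - (w - 1) := by rw [hx1, Matrix.mul_one]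
    have hw'eq : w' = w := by
      have h2 : w * wi' = 1 := by rw [← hx, hx1]
      calc w' = w * wi' * w' := by rw [h2, Matrix.one_mul]
      _ = w * (wi' * w') := Matrix.mul_assoc ..
      _ = w := by rw [hwiw', Matrix.mul_one]
    exact Prod.ext hv'eq hw'eq
end

section
/- Let β = α_{ij} ∈ Φ(U_φ) (so d+1 ≤ i, j = i + md for some m ≥ 1) and let p ∈ {1,…,d} with p ≡ i (mod d). Set \mathring{u} = I + ∑_{α ∈ Φ(Υ)} E_α, t = diag(1,…,1,t_j,1,…,1) (entry t_j in position j), and v = I + (1−t_j)E_{ij}. Then v·\mathring{u}·v⁻¹ = t⁻¹·\mathring{u}·t. -/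
open Matrix

/-- `\mathring{u} = I + ∑_{α ∈ Φ(Υ)} E_α` where (zero-indexed)
`Φ(Υ) = { (p,q) : p < d, p+d ≤ q < n, q ≡ p (mod d) }`. -/
def muMat (k : Type*) [Field k] (n d : ℕ) : Matrix (Fin n) (Fin n) k :=
  Matrix.of fun i j =>
    if i = j then 1
    else if (i : ℕ) < d ∧ (i : ℕ) + d ≤ (j : ℕ) ∧ (j : ℕ) % d = (i : ℕ) % d then 1
    else 0

/-!
Write `u = \mathring{u}` and `E = E_{ij}`. Row `j` of `u` is that of the identity (as `j ≥ d`)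
and column `i` is `e_i + e_p`, so `Eu = E` and `uE = E + E_{pj}`. With `E² = 0`, conjugating by
`v = 1 + sE` gives `u + s(Eu - uE) - s²EuE = u - s E_{pj}`: the commutator relation
`[E_{ij}, E_{pi}] = -E_{pj}`. Conjugating by the diagonal `t` instead scales row `j` by `t_j⁻¹`
and column `j` by `t_j`; row `j` is fixed and column `j = e_j + e_p` becomes `e_j + t_j e_p`, so
`u` changes by `(t_j - 1) E_{pj}` as well.
-/

section Algebra

variable {R A : Type*} [CommRing R] [Ring A] [Algebra R A]

theorem one_add_smul_mul_mul_one_sub_smul (s : R) {e m q : A} (hem : e * m = e)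
    (hme : m * e = e + q) (hee : e * e = 0) :
    (1 + s • e) * m * (1 - s • e) = m - s • q := by
  simp only [add_mul, one_mul, mul_sub, mul_one, mul_smul_comm, smul_mul_assoc, hem, hme, hee,
    smul_add, smul_zero]
  abel

end Algebra

namespace Matrix

variable {n R : Type*} [Fintype n] [DecidableEq n] [CommRing R]

theorem single_mul_eq_of_row_eq {M N : Matrix n n R} {j : n} (h : M j = N j) (i : n) (x : R) :
    single i j x * M = single i j x * N := by
  ext a b
  by_cases ha : a = i
  · subst ha
    simp only [single_mul_apply_same, h]
  · simp only [single_mul_apply_of_ne _ _ _ _ _ ha]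

theorem mul_single_eq_of_col_eq {M N : Matrix n n R} {i : n} (h : ∀ a, M a i = N a i)
    (j : n) (x : R) : M * single i j x = N * single i j x := by
  ext a b
  by_cases hb : b = j
  · subst hb
    simp only [mul_single_apply_same, h]
  · simp only [mul_single_apply_of_ne _ _ _ _ _ hb]

theorem diagonal_ite_inv_mul_mul_diagonal_ite {M : Matrix n n R} {j p : n} (hpj : p ≠ j)
    (hrow : M j = (1 : Matrix n n R) j)
    (hcol : ∀ a, M a j = (1 + single p j 1 : Matrix n n R) a j)
    (c : Rˣ) :
    diagonal (fun a => if a = j then ((c⁻¹ : Rˣ) : R) else 1) * M *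
        diagonal (fun a => if a = j then (c : R) else 1)
      = M - (1 - (c : R)) • single p j 1 := by
  ext a b
  simp only [mul_diagonal, diagonal_mul, sub_apply, smul_apply, smul_eq_mul]
  by_cases ha : a = j
  · subst ha
    have hMab := congrFun hrow b
    by_cases hb : b = a
    · subst hb
      simp [hMab, hpj]
    · simp [hMab, hpj, hb, Ne.symm hb]
  · by_cases hb : b = j
    · subst hb
      rw [hcol a]
      by_cases hap : a = p
      · subst hap
        simp [ha]
      · simp [ha, Ne.symm hap]
    · simp [ha, hb, Ne.symm hb]

end Matrix

section muMat

variable {k : Type*} [Field k] {n d : ℕ}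

theorem muMat_row_of_le {a : Fin n} (ha : d ≤ (a : ℕ)) :
    muMat k n d a = (1 : Matrix _ _ k) a := by
  ext b
  simp only [muMat, of_apply, one_apply]
  split_ifs <;> first | rfl | omega

theorem muMat_col_of_mod_eq {p q : Fin n} (hp : (p : ℕ) < d) (hq : d ≤ (q : ℕ))
    (hpq : (q : ℕ) % d = (p : ℕ) % d) (a : Fin n) :
    muMat k n d a q = (1 + single p q 1 : Matrix _ _ k) a q := by
  have hpd : (p : ℕ) + d ≤ q := by
    have := Nat.mod_le ((q : ℕ) - d) d
    rw [← Nat.mod_eq_sub_mod hq, hpq, Nat.mod_eq_of_lt hp] at this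
    omega
  have hkey :
      ((a : ℕ) < d ∧ (a : ℕ) + d ≤ q ∧ (q : ℕ) % d = (a : ℕ) % d) ↔ a = p := by
    constructor
    · rintro ⟨had, -, hmod⟩
      rw [hpq, Nat.mod_eq_of_lt hp, Nat.mod_eq_of_lt had] at hmod
      exact Fin.ext hmod.symm
    · rintro rfl
      exact ⟨hp, hpd, hpq⟩
  have hqp : q ≠ p := fun h => by subst h; omega
  simp only [muMat, of_apply, Matrix.add_apply, one_apply, single_apply, hkey]
  by_cases haq : a = q
  · subst haq
    simp [Ne.symm hqp]
  · simp [haq, eq_comm]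

end muMat

theorem conj_mu_by_v_eq_conj_by_t_general (k : Type*) [Field k] (n d : ℕ)
    (i j : Fin n) (hi : d ≤ (i : ℕ)) (hij : (i : ℕ) + d ≤ (j : ℕ))
    (hcong : (j : ℕ) % d = (i : ℕ) % d)
    (p : Fin n) (hp : (p : ℕ) < d) (hpi : (p : ℕ) % d = (i : ℕ) % d)
    (c : kˣ) :
    (1 + (1 - (c : k)) • Matrix.single i j (1 : k)) * muMat k n d *
        (1 - (1 - (c : k)) • Matrix.single i j (1 : k))
      = Matrix.diagonal (fun a => if a = j then ((c⁻¹ : kˣ) : k) else 1) * muMat k n d *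
        Matrix.diagonal (fun a => if a = j then (c : k) else 1) := by
  have hdj : d ≤ (j : ℕ) := le_of_add_le_right hij
  have hpj : p ≠ j := fun h => by subst h; omega
  have hji : j ≠ i := fun h => by subst h; omega
  have hrow := muMat_row_of_le (k := k) hdj
  rw [diagonal_ite_inv_mul_mul_diagonal_ite hpj hrow
    (muMat_col_of_mod_eq hp hdj (hcong.trans hpi.symm)) c]
  refine one_add_smul_mul_mul_one_sub_smul _ ?_ ?_ (single_mul_single_of_ne _ _ _ _ hji _)
  · rw [single_mul_eq_of_row_eq hrow, mul_one]
  · rw [mul_single_eq_of_col_eq (muMat_col_of_mod_eq hp hi hpi.symm), add_mul, one_mul,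
      single_mul_single_same, one_mul]

/-- For `β = α_{ij} ∈ Φ(U_φ)` (zero-indexed: `d ≤ i`, `i+d ≤ j`, `j ≡ i (mod d)`)
and `p < d` with `p ≡ i (mod d)`, setting `t = diag(1,…,1,t_j,1,…,1)` and
`v = I + (1−t_j)E_{ij}`, one has `v·\mathring{u}·v⁻¹ = t⁻¹·\mathring{u}·t`. -/
theorem conj_mu_by_v_eq_conj_by_t (k : Type*) [Field k] (n d : ℕ) (hd : 1 ≤ d)
    (i j : Fin n) (hi : d ≤ (i : ℕ)) (hij : (i : ℕ) + d ≤ (j : ℕ))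
    (hcong : (j : ℕ) % d = (i : ℕ) % d)
    (p : Fin n) (hp : (p : ℕ) < d) (hpi : (p : ℕ) % d = (i : ℕ) % d)
    (c : kˣ) :
    (1 + (1 - (c : k)) • Matrix.single i j (1 : k)) * muMat k n d *
        (1 - (1 - (c : k)) • Matrix.single i j (1 : k))
      = Matrix.diagonal (fun a => if a = j then ((c⁻¹ : kˣ) : k) else 1) * muMat k n d *
        Matrix.diagonal (fun a => if a = j then (c : k) else 1) :=
  conj_mu_by_v_eq_conj_by_t_general k n d i j hi hij hcong p hp hpi c
end

section
/- Let k be a finite field, ψ a nontrivial additive character of k, and χ₁,…,χₙ, ρ₁,…,ρₙ multiplicative characters of kˣ with χᵢ ≠ ρⱼ for all i,j. Then for every a ∈ kˣ with a ≠ 1 (corresponding to a point of ℙ¹ − {0,1,∞}): ∑_{x₁⋯xₙ = a·y₁⋯yₙ, xᵢ,yⱼ ∈ kˣ} ψ(∑xᵢ − ∑yⱼ)·∏χᵢ(xᵢ)·∏ρⱼ(yⱼ)⁻¹ = ∏_{i=1}^n G(ψ, χᵢρᵢ⁻¹) · ∑_{z₁⋯zₙ = a, zᵢ ∉ {0,1}}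 ∏_{i=1}^n χᵢ(zᵢ)·(χᵢ⁻¹ρᵢ)(zᵢ − 1), where G(ψ, χ) = ∑_{w ∈ kˣ} ψ(w)χ(w). -/
/-!
Substituting `x = z * y` turns the constraint into `z₁⋯zₙ = a` and makes the summand a product over
`i` of functions of `yᵢ`, so the sum over `y` factors. Each factor is a twisted Gauss sum
`∑_y ψ((zᵢ - 1) y) (χᵢρᵢ⁻¹)(y) = (χᵢ⁻¹ρᵢ)(zᵢ - 1) · G(ψ, χᵢρᵢ⁻¹)`; at `zᵢ = 1` it is the sum of the
nontrivial character `χᵢρᵢ⁻¹`, hence `0`, which is why the points `zᵢ = 1` may be dropped.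
-/

open Finset

/-- Extension by zero of a multiplicative character `kˣ → ℂˣ` to the field `k`. -/
noncomputable def extChar {k : Type*} [Field k] [DecidableEq k]
    (χ : kˣ →* ℂˣ) (x : k) : ℂ :=
  if h : x ≠ 0 then (χ (Units.mk0 x h) : ℂ) else 0

lemma AddChar.map_sum_eq_prod {A M ι : Type*} [AddCommMonoid A] [CommMonoid M]
    (ψ : AddChar A M) (s : Finset ι) (f : ι → A) :
    ψ (∑ i ∈ s, f i) = ∏ i ∈ s, ψ (f i) :=
  map_prod ψ.toMonoidHom (fun i => Multiplicative.ofAdd (f i)) s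

lemma Fintype.sum_sum_ite_prod_eq_mul_prod {G M ι : Type*} [CommGroup G] [Fintype G]
    [DecidableEq G] [AddCommMonoid M] [Fintype ι] [DecidableEq ι] (a : G)
    (F : (ι → G) → (ι → G) → M) :
    (∑ x, ∑ y, if ∏ i, x i = a * ∏ i, y i then F x y else 0) =
      ∑ z, if ∏ i, z i = a then ∑ y, F (z * y) y else 0 := by
  trans ∑ y, ∑ z, if ∏ i, z i = a then F (z * y) y else 0
  · rw [Finset.sum_comm]
    refine Finset.sum_congr rfl fun y _ => (Equiv.sum_comp (Equiv.mulRight y) _).symm.trans ?_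
    simp [Finset.prod_mul_distrib]
  · rw [Finset.sum_comm]
    simp only [Finset.sum_ite_irrel, Finset.sum_const_zero]

section Field

variable {k : Type*} [Field k] [DecidableEq k]

@[simp]
lemma extChar_zero (χ : kˣ →* ℂˣ) : extChar χ 0 = 0 := by
  simp [extChar]

@[simp]
lemma extChar_coe_units (χ : kˣ →* ℂˣ) (u : kˣ) : extChar χ u = χ u := by
  simp [extChar]

variable [Fintype k]

lemma sum_addChar_mul_mul_char (ψ : AddChar k ℂ) {φ : kˣ →* ℂˣ} (hφ : φ ≠ 1) (c : k) :
    ∑ y : kˣ, ψ (c * y) * φ y = extChar φ⁻¹ c * ∑ w : kˣ, ψ w * φ w := by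
  rcases eq_or_ne c 0 with rfl | hc
  · have hcoe : (Units.coeHom ℂ).comp φ ≠ 1 := fun h =>
      hφ (MonoidHom.ext fun u => Units.ext (DFunLike.congr_fun h u))
    simpa using sum_hom_units_eq_zero _ hcoe
  · lift c to kˣ using IsUnit.mk0 c hc
    conv_rhs => rw [← Equiv.sum_comp (Equiv.mulLeft c), mul_sum, extChar_coe_units]
    refine sum_congr rfl fun y _ => ?_
    simp only [Equiv.coe_mulLeft, Units.val_mul, map_mul, MonoidHom.inv_apply,
      Units.val_inv_eq_inv_val]
    field_simp

lemma sum_addChar_sub_mul_char_mul_inv (ψ : AddChar k ℂ) {χ ρ : kˣ →* ℂˣ} (h : χ ≠ ρ)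
    (z : kˣ) :
    ∑ y : kˣ, ψ (((z * y : kˣ) : k) - y) * χ (z * y) * (ρ y : ℂ)⁻¹ =
      χ z * extChar (χ⁻¹ * ρ) (z - 1) * ∑ w : kˣ, ψ w * (χ * ρ⁻¹) w := by
  have hinv : (χ * ρ⁻¹)⁻¹ = χ⁻¹ * ρ := by
    ext x
    simp [mul_comm]
  rw [mul_assoc, ← hinv, ← sum_addChar_mul_mul_char ψ fun h' => h (mul_inv_eq_one.mp h'),
    mul_sum]
  refine sum_congr rfl fun y _ => ?_
  simp only [Units.val_mul, map_mul, MonoidHom.mul_apply, MonoidHom.inv_apply,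
    Units.val_inv_eq_inv_val]
  ring_nf

variable {ι : Type*} [Fintype ι] [DecidableEq ι]

lemma sum_hypergeometric_fiber (ψ : AddChar k ℂ) (χ ρ : ι → kˣ →* ℂˣ) (h : ∀ i, χ i ≠ ρ i)
    (z : ι → kˣ) :
    ∑ y : ι → kˣ, ψ (∑ i, (((z * y) i : kˣ) : k) - ∑ i, (y i : k)) *
        (∏ i, (χ i ((z * y) i) : ℂ)) * ∏ i, (ρ i (y i) : ℂ)⁻¹ =
      (∏ i, ∑ w : kˣ, ψ w * ((χ i * (ρ i)⁻¹) w : ℂ)) *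
        ∏ i, (χ i (z i) : ℂ) * extChar ((χ i)⁻¹ * ρ i) (z i - 1) := by
  have factor : ∀ y : ι → kˣ,
      ψ (∑ i, (((z * y) i : kˣ) : k) - ∑ i, (y i : k)) *
        (∏ i, (χ i ((z * y) i) : ℂ)) * ∏ i, (ρ i (y i) : ℂ)⁻¹ =
      ∏ i, ψ (((z i * y i : kˣ) : k) - y i) * χ i (z i * y i) * (ρ i (y i) : ℂ)⁻¹ := by
    intro y
    rw [← sum_sub_distrib, ψ.map_sum_eq_prod, ← prod_mul_distrib, ← prod_mul_distrib]
    rfl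
  simp_rw [factor]
  rw [← Fintype.prod_sum fun i (y : kˣ) =>
    ψ (((z i * y : kˣ) : k) - y) * χ i (z i * y) * (ρ i y : ℂ)⁻¹, ← prod_mul_distrib]
  exact prod_congr rfl fun i _ =>
    (sum_addChar_sub_mul_char_mul_inv ψ (h i) (z i)).trans (mul_comm _ _)

-- The `∀` instance is a parameter: at `ι = Fin n` it is `Nat.decidableForallFin`.
lemma sum_pi_ite_prod_eq_sum_pi_units [DecidablePred fun z : ι → k => ∀ i, z i ≠ 0 ∧ z i ≠ 1]
    (f : ι → k → ℂ) (hf : ∀ i, f i 1 = 0) (a : kˣ) :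
    (∑ z : ι → k, if ∏ i, z i = (a : k) ∧ ∀ i, z i ≠ 0 ∧ z i ≠ 1 then ∏ i, f i (z i) else 0) =
      ∑ z : ι → kˣ, if ∏ i, z i = a then ∏ i, f i (z i) else 0 := by
  refine (Fintype.sum_of_injective (fun z i => (z i : k))
    (fun z w h => funext fun i => Units.ext (congrFun h i)) _ _ ?_ fun z => ?_).symm
  · intro z hz
    rw [if_neg]
    rintro ⟨-, hz'⟩
    exact hz ⟨fun i => Units.mk0 (z i) (hz' i).1, rfl⟩
  · have hprod : ∏ i, (z i : k) = a ↔ ∏ i, z i = a := by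
      rw [← Units.coe_prod, Units.val_inj]
    by_cases h1 : ∃ i, z i = 1
    · obtain ⟨i, hi⟩ := h1
      rw [prod_eq_zero (mem_univ i) (by simp [hi, hf])]
      simp
    · push Not at h1
      simp [hprod, h1]

end Field

theorem tame_hypergeometric_trace_identity_general
    (k : Type*) [Field k] [Fintype k] [DecidableEq k]
    (n : ℕ) (ψ : AddChar k ℂ)
    (χ ρ : Fin n → (kˣ →* ℂˣ))
    (hdisj : ∀ i j, χ i ≠ ρ j)
    (a : kˣ) :
    (∑ x : Fin n → kˣ, ∑ y : Fin n → kˣ,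
      if (∏ i, x i) = a * ∏ i, y i then
        ψ ((∑ i, ((x i : k))) - ∑ i, ((y i : k))) *
          (∏ i, ((χ i) (x i) : ℂ)) * ∏ i, (((ρ i) (y i) : ℂ))⁻¹
      else 0)
    = (∏ i, ∑ w : kˣ, ψ (w : k) * (((χ i) * (ρ i)⁻¹) w : ℂ)) *
      ∑ z : Fin n → k,
        if (∏ i, z i) = (a : k) ∧ ∀ i, z i ≠ 0 ∧ z i ≠ 1 then
          ∏ i, extChar (χ i) (z i) * extChar ((χ i)⁻¹ * (ρ i)) (z i - 1)
        else 0 := by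
  rw [Fintype.sum_sum_ite_prod_eq_mul_prod, sum_pi_ite_prod_eq_sum_pi_units
    (fun i t => extChar (χ i) t * extChar ((χ i)⁻¹ * ρ i) (t - 1)) (by simp), mul_sum]
  refine sum_congr rfl fun z _ => ?_
  simp only [sum_hypergeometric_fiber ψ χ ρ (fun i => hdisj i i) z, extChar_coe_units, mul_ite,
    mul_zero]

/-- The finite hypergeometric sum equals, up to the product of the Gauss sums
`G(ψ, χᵢρᵢ⁻¹)`, the trace of the Hecke eigenvalue: for `a ∈ ℙ¹ − {0,1,∞}`,
`∑_{x₁⋯xₙ = a·y₁⋯yₙ} ψ(∑xᵢ − ∑yⱼ)·∏χᵢ(xᵢ)·∏ρⱼ(yⱼ)⁻¹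
  = ∏ᵢ G(ψ, χᵢρᵢ⁻¹) · ∑_{z₁⋯zₙ = a, zᵢ∉{0,1}} ∏ᵢ χᵢ(zᵢ)·(χᵢ⁻¹ρᵢ)(zᵢ − 1)`. -/
theorem tame_hypergeometric_trace_identity
    (k : Type*) [Field k] [Fintype k] [DecidableEq k]
    (n : ℕ) (ψ : AddChar k ℂ) (hψ : ψ ≠ 1)
    (χ ρ : Fin n → (kˣ →* ℂˣ))
    (hdisj : ∀ i j, χ i ≠ ρ j)
    (a : kˣ) (ha : a ≠ 1) :
    (∑ x : Fin n → kˣ, ∑ y : Fin n → kˣ,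
      if (∏ i, x i) = a * ∏ i, y i then
        ψ ((∑ i, ((x i : k))) - ∑ i, ((y i : k))) *
          (∏ i, ((χ i) (x i) : ℂ)) * ∏ i, (((ρ i) (y i) : ℂ))⁻¹
      else 0)
    = (∏ i, ∑ w : kˣ, ψ (w : k) * (((χ i) * (ρ i)⁻¹) w : ℂ)) *
      ∑ z : Fin n → k,
        if (∏ i, z i) = (a : k) ∧ ∀ i, z i ≠ 0 ∧ z i ≠ 1 then
          ∏ i, extChar (χ i) (z i) * extChar ((χ i)⁻¹ * (ρ i)) (z i - 1)
        else 0 :=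
  tame_hypergeometric_trace_identity_general k n ψ χ ρ hdisj a
end
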